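/- Let q be a complex number with 0 < |q| < 1 and let n ≥ 1 be an integer. Then ∑_{k=0}^{n} (k(k−1)/2)·[n choose k]_q·(−1)^k·q^{k(k−1)/2} = (q;q)_{n−1} · ∑_{k=1}^{n−1} q^k/(1 − q^k). -/

import Mathlib

/-- The finite q-Pochhammer symbol `(a;q)_n = ∏_{k=0}^{n-1} (1 - a q^k)`. -/
noncomputable def qPoch (a q : ℂ) (n : ℕ) : ℂ := ∏ k ∈ Finset.range n, (1 - a * q ^ k)

/-- The Gaussian (q-binomial) coefficient `[n choose k]_q`. -/
noncomputable def qBinom (q : ℂ) (n k : ℕ) : ℂ := qPoch q q n / (qPoch q q k * qPoch q q (n - k))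

/-!
By Cauchy's `q`-binomial theorem, `[n choose k]_q (-1)^k q^(k(k-1)/2)` is the coefficient of `X^k`
in `(X;q)_n = ∏_{j<n} (1 - q^j X)`, so the left-hand side is the second Hasse derivative of
`(X;q)_n` at `X = 1`. Since `(X;q)_n = (1 - X) (qX;q)_{n-1}` vanishes at `1`, this equals
`-(qX;q)'_{n-1}` at `1`, and the logarithmic derivative of a product of linear factors gives
`(q;q)_{n-1} ∑_{j=1}^{n-1} q^j / (1 - q^j)`.
-/

open Polynomial Finset

theorem hasseDeriv_succ_X_sub_C_mul {R : Type*} [CommRing R] (a : R) (p : R[X]) (k : ℕ) :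
    hasseDeriv (k + 1) ((X - C a) * p) = (X - C a) * hasseDeriv (k + 1) p + hasseDeriv k p := by
  rw [hasseDeriv_mul, Nat.sum_antidiagonal_succ, sum_eq_single (0, k)]
  · simp
  · rintro ⟨i, j⟩ hmem hne
    have hi : 1 < i + 1 := by grind [HasAntidiagonal.mem_antidiagonal]
    simp [hasseDeriv_X _ hi, hasseDeriv_C _ _ (zero_lt_one.trans hi)]
  · simp

theorem sum_range_choose_mul_coeff {R : Type*} [Semiring R] (k : ℕ) {p : R[X]} {n : ℕ}
    (hp : p.natDegree < n) :
    ∑ i ∈ range n, (i.choose k : R) * p.coeff i = (hasseDeriv k p).eval 1 := by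
  rw [hasseDeriv_apply, eval_sum]
  simp only [eval_monomial, one_pow, mul_one]
  exact (sum_over_range' p (by simp) n hp).symm

theorem eval_derivative_prod_one_sub_C_mul_X {K ι : Type*} [Field K] [DecidableEq ι]
    (s : Finset ι) (b : ι → K) (x : K) (hb : ∀ i ∈ s, 1 - b i * x ≠ 0) :
    (derivative (∏ i ∈ s, (1 - C (b i) * X))).eval x =
      -(∏ i ∈ s, (1 - b i * x)) * ∑ i ∈ s, b i / (1 - b i * x) := by
  rw [derivative_prod_finset, eval_finsetSum, mul_sum]
  refine sum_congr rfl fun i hi => ?_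
  rw [← prod_erase_mul s _ hi, neg_mul, mul_assoc, mul_div_cancel₀ _ (hb i hi)]
  simp [eval_prod]

theorem qPoch_zero (a q : ℂ) : qPoch a q 0 = 1 := prod_range_zero _

theorem qPoch_succ (a q : ℂ) (n : ℕ) : qPoch a q (n + 1) = qPoch a q n * (1 - a * q ^ n) :=
  prod_range_succ _ n

-- The polynomial `(X;q)_n`, whose value at `x` is `qPoch x q n`.
noncomputable def qPochPoly (q : ℂ) (n : ℕ) : ℂ[X] := ∏ j ∈ range n, (1 - C (q ^ j) * X)

theorem natDegree_qPochPoly_le (q : ℂ) (n : ℕ) : (qPochPoly q n).natDegree ≤ n := by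
  refine (natDegree_prod_le _ _).trans ?_
  have hlin : ∀ j, (1 - C (q ^ j) * X).natDegree ≤ 1 := fun j => by compute_degree
  simpa using sum_le_sum fun j (_ : j ∈ range n) => hlin j

theorem coeff_zero_qPochPoly (q : ℂ) (n : ℕ) : (qPochPoly q n).coeff 0 = 1 := by
  simp [coeff_zero_eq_eval_zero, qPochPoly, eval_prod]

theorem coeff_succ_qPochPoly_succ (q : ℂ) (n k : ℕ) :
    (qPochPoly q (n + 1)).coeff (k + 1) =
      (qPochPoly q n).coeff (k + 1) - q ^ n * (qPochPoly q n).coeff k := by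
  rw [qPochPoly, prod_range_succ, ← qPochPoly, mul_sub, mul_one, mul_left_comm,
    coeff_sub, coeff_C_mul, coeff_mul_X]

theorem qPochPoly_succ_eq_one_sub_X_mul (q : ℂ) (m : ℕ) :
    qPochPoly q (m + 1) = (1 - X) * ∏ j ∈ range m, (1 - C (q * q ^ j) * X) := by
  simp [qPochPoly, prod_range_succ', pow_succ', mul_comm]

section NotRootOfUnity

variable {q : ℂ} (hq : ∀ k, 0 < k → q ^ k ≠ 1)
include hq

theorem one_sub_pow_ne_zero {k : ℕ} (hk : 0 < k) : 1 - q ^ k ≠ 0 :=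
  sub_ne_zero.mpr (hq k hk).symm

theorem qPoch_self_ne_zero (n : ℕ) : qPoch q q n ≠ 0 :=
  prod_ne_zero_iff.mpr fun k _ => by
    simpa only [pow_succ'] using one_sub_pow_ne_zero hq k.succ_pos

theorem qBinom_zero_right (n : ℕ) : qBinom q n 0 = 1 := by
  rw [qBinom, Nat.sub_zero, qPoch_zero, one_mul, div_self (qPoch_self_ne_zero hq n)]

theorem qBinom_self (n : ℕ) : qBinom q n n = 1 := by
  rw [qBinom, Nat.sub_self, qPoch_zero, mul_one, div_self (qPoch_self_ne_zero hq n)]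

theorem qBinom_succ_succ {n k : ℕ} (hk : k < n) :
    qBinom q (n + 1) (k + 1) = qBinom q n (k + 1) + q ^ (n - k) * qBinom q n k := by
  obtain ⟨m, rfl⟩ : ∃ m, n = k + 1 + m := ⟨n - (k + 1), by omega⟩
  simp only [qBinom, show k + 1 + m + 1 - (k + 1) = m + 1 by omega,
    show k + 1 + m - (k + 1) = m by omega, show k + 1 + m - k = m + 1 by omega,
    qPoch_succ, ← pow_succ']
  have hP := qPoch_self_ne_zero hq
  have hk1 := one_sub_pow_ne_zero hq (Nat.succ_pos k)
  have hm1 := one_sub_pow_ne_zero hq (Nat.succ_pos m)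
  have hn1 := one_sub_pow_ne_zero hq (Nat.succ_pos (k + 1 + m))
  field_simp
  ring

theorem coeff_qPochPoly {n k : ℕ} (hk : k ≤ n) :
    (qPochPoly q n).coeff k = qBinom q n k * (-1) ^ k * q ^ k.choose 2 := by
  induction n generalizing k with
  | zero => simp [nonpos_iff_eq_zero.mp hk, coeff_zero_qPochPoly, qBinom_zero_right hq]
  | succ n ih =>
    cases k with
    | zero => simp [coeff_zero_qPochPoly, qBinom_zero_right hq]
    | succ k =>
      rw [coeff_succ_qPochPoly_succ]
      rcases (Nat.lt_succ_iff.mp hk).lt_or_eq with hkn | rfl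
      · have hpow : q ^ n = q ^ (n - k) * q ^ k := by rw [← pow_add, Nat.sub_add_cancel hkn.le]
        rw [ih (k := k + 1) hkn, ih hkn.le, qBinom_succ_succ hq hkn, hpow, Nat.choose_succ_succ',
          Nat.choose_one_right]
        ring
      · have htop : (qPochPoly q k).coeff (k + 1) = 0 :=
          coeff_eq_zero_of_natDegree_lt ((natDegree_qPochPoly_le q k).trans_lt k.lt_succ_self)
        rw [htop, ih le_rfl, qBinom_self hq, qBinom_self hq, Nat.choose_succ_succ',
          Nat.choose_one_right]
        ring

theorem sum_choose_two_mul_qBinom (n : ℕ) :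
    ∑ k ∈ range (n + 1), (k.choose 2 : ℂ) * qBinom q n k * (-1) ^ k * q ^ k.choose 2 =
      (hasseDeriv 2 (qPochPoly q n)).eval 1 := by
  rw [← sum_range_choose_mul_coeff 2 ((natDegree_qPochPoly_le q n).trans_lt n.lt_succ_self)]
  refine sum_congr rfl fun k hk => ?_
  rw [coeff_qPochPoly hq (Nat.lt_succ_iff.mp (mem_range.mp hk))]
  ring

theorem eval_one_hasseDeriv_two_qPochPoly_succ (m : ℕ) :
    (hasseDeriv 2 (qPochPoly q (m + 1))).eval 1 =
      qPoch q q m * ∑ j ∈ Icc 1 m, q ^ j / (1 - q ^ j) := by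
  have hone : (1 : ℂ[X]) - X = -(X - C 1) := by simp
  rw [qPochPoly_succ_eq_one_sub_X_mul, hone, neg_mul, map_neg, hasseDeriv_succ_X_sub_C_mul,
    hasseDeriv_one', eval_neg, eval_add, eval_mul]
  rw [eval_derivative_prod_one_sub_C_mul_X _ _ _ fun j _ => by
    simpa [← pow_succ'] using one_sub_pow_ne_zero hq j.succ_pos]
  simp only [eval_sub, eval_X, eval_C, sub_self, zero_mul, zero_add, mul_one, neg_mul, neg_neg]
  rw [qPoch, ← Ico_add_one_right_eq_Icc, sum_Ico_eq_sum_range, Nat.add_sub_cancel]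
  simp only [add_comm 1, pow_succ']

end NotRootOfUnity

theorem stmt3_general (q : ℂ) (hq1 : ‖q‖ < 1) (n : ℕ) :
    ∑ k ∈ Finset.range (n + 1),
        ((k * (k - 1) / 2 : ℕ) : ℂ) * qBinom q n k * (-1) ^ k * q ^ (k * (k - 1) / 2) =
      qPoch q q (n - 1) * ∑ k ∈ Finset.Icc 1 (n - 1), q ^ k / (1 - q ^ k) := by
  have hq : ∀ k, 0 < k → q ^ k ≠ 1 := fun k hk hqk =>
    (pow_lt_one₀ (norm_nonneg q) hq1 hk.ne').ne (by rw [← norm_pow, hqk, norm_one])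
  simp only [← Nat.choose_two_right]
  rw [sum_choose_two_mul_qBinom hq]
  cases n with
  | zero => simp [qPochPoly, hasseDeriv_apply_one]
  | succ m => exact eval_one_hasseDeriv_two_qPochPoly_succ hq m

theorem stmt3 (q : ℂ) (hq0 : 0 < ‖q‖) (hq1 : ‖q‖ < 1)
    (n : ℕ) (hn : 1 ≤ n) :
    ∑ k ∈ Finset.range (n + 1),
        ((k * (k - 1) / 2 : ℕ) : ℂ) * qBinom q n k * (-1) ^ k * q ^ (k * (k - 1) / 2) =
      qPoch q q (n - 1) * ∑ k ∈ Finset.Icc 1 (n - 1), q ^ k / (1 - q ^ k) :=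
  stmt3_general q hq1 n
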